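/- Let z₄ > 0, I₀ > 0 with M := z₄I₀ > 1, b₂ > 0, b₁ = ∫₀¹√(1-u⁴)du, and set K₀(I) = 2^(-10/3)b₁^(-4/3)z₄^(1/3)I^(4/3), β = b₂I₀/log M, and m = βK₀''(I₀). Suppose J ∈ ℝ and J* between 0 and J satisfy |b₂J*/log M| ≤ L < 1. Then |β² K₀'''(I₀ + βJ*) J| ≤ (1/27)·2^(-1/3)·b₁^(-4/3)·b₂·(z₄^(1/3)I₀^(1/3)/log M)·(1-L)^(-5/3)·|b₂J/log M|, and if additionally L ≤ 47/200 and |b₂J/log M| ≤ L, then |β²K₀'''(I₀+βJ*)J| < m/4. -/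

import Mathlib

private lemma deriv_eq_on_pos {f : ℝ → ℝ} {c p : ℝ}
    (h : ∀ x : ℝ, 0 < x → f x = c * x ^ p) :
    ∀ x : ℝ, 0 < x → deriv f x = c * p * x ^ (p - 1) := by
  intro x hx
  have hev : f =ᶠ[nhds x] fun y => c * y ^ p := by
    filter_upwards [eventually_gt_nhds hx] with y hy using h y hy
  rw [Filter.EventuallyEq.deriv_eq hev]
  have hd := (Real.hasDerivAt_rpow_const (x := x) (p := p) (Or.inl hx.ne')).const_mul c
  rw [hd.deriv]; ring

private lemma num_key : (47/75 : ℝ) < (153/200 : ℝ) ^ ((5/3 : ℝ)) := by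
  have h1 : ((47/75:ℝ))^(3:ℕ) < ((153/200:ℝ))^(5:ℕ) := by norm_num
  have h2 : (((47/75:ℝ))^(3:ℕ))^((1/3:ℝ)) < (((153/200:ℝ))^(5:ℕ))^((1/3:ℝ)) :=
    Real.rpow_lt_rpow (by positivity) h1 (by norm_num)
  rw [← Real.rpow_natCast (47/75:ℝ) 3, ← Real.rpow_natCast (153/200:ℝ) 5,
      ← Real.rpow_mul (by norm_num), ← Real.rpow_mul (by norm_num)] at h2
  norm_num at h2
  linarith [h2]

set_option maxHeartbeats 1600000 in
theorem twist_condition (z₄ I₀ b₂ L : ℝ) (hz : 0 < z₄) (hI₀ : 0 < I₀)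
    (hM : 1 < z₄ * I₀) (hb₂ : 0 < b₂)
    (b₁ : ℝ) (hb₁ : b₁ = ∫ u in (0:ℝ)..1, Real.sqrt (1 - u ^ 4))
    (K₀ : ℝ → ℝ) (hK₀ : ∀ J : ℝ, 0 < J →
      K₀ J = 2 ^ (-(10/3 : ℝ)) * b₁ ^ (-(4/3 : ℝ)) * z₄ ^ ((1/3 : ℝ)) * J ^ ((4/3 : ℝ)))
    (β : ℝ) (hβ : β = b₂ * I₀ / Real.log (z₄ * I₀))
    (m : ℝ) (hm : m = β * deriv (deriv K₀) I₀)
    (J Jstar : ℝ) (hJstar : Jstar ∈ Set.uIcc 0 J)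
    (hL1 : L < 1) (hJstarL : |b₂ * Jstar / Real.log (z₄ * I₀)| ≤ L) :
    |β ^ 2 * deriv (deriv (deriv K₀)) (I₀ + β * Jstar) * J|
      ≤ (1/27) * 2 ^ (-(1/3 : ℝ)) * b₁ ^ (-(4/3 : ℝ)) * b₂ *
          (z₄ ^ ((1/3 : ℝ)) * I₀ ^ ((1/3 : ℝ)) / Real.log (z₄ * I₀)) *
          (1 - L) ^ (-(5/3 : ℝ)) * |b₂ * J / Real.log (z₄ * I₀)| ∧
    (L ≤ 47 / 200 → |b₂ * J / Real.log (z₄ * I₀)| ≤ L →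
      |β ^ 2 * deriv (deriv (deriv K₀)) (I₀ + β * Jstar) * J| < m / 4) := by
  have hlMpos : 0 < Real.log (z₄ * I₀) := Real.log_pos hM
  set lM := Real.log (z₄ * I₀) with hlM
  have hlMne : lM ≠ 0 := ne_of_gt hlMpos
  -- b₁ > 0
  have hb₁pos : 0 < b₁ := by
    rw [hb₁]
    apply intervalIntegral.intervalIntegral_pos_of_pos_on
    · exact (Real.continuous_sqrt.comp (by continuity)).intervalIntegrable 0 1
    · intro x hx
      have h4 : x ^ 4 < 1 := pow_lt_one₀ hx.1.le hx.2 (by norm_num)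
      exact Real.sqrt_pos.mpr (by linarith)
    · norm_num
  set c := (2:ℝ) ^ (-(10/3 : ℝ)) * b₁ ^ (-(4/3 : ℝ)) * z₄ ^ ((1/3 : ℝ)) with hc
  have hcpos : 0 < c := by
    rw [hc]
    exact mul_pos (mul_pos (Real.rpow_pos_of_pos two_pos _)
      (Real.rpow_pos_of_pos hb₁pos _)) (Real.rpow_pos_of_pos hz _)
  -- derivatives
  have hd1 : ∀ x : ℝ, 0 < x → deriv K₀ x = c * (4/3) * x ^ ((1/3 : ℝ)) := by
    have h := deriv_eq_on_pos (f := K₀) (c := c) (p := (4/3 : ℝ)) (fun x hx => hK₀ x hx)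
    intro x hx
    rw [h x hx]
    norm_num
  have hd2 : ∀ x : ℝ, 0 < x →
      deriv (deriv K₀) x = (c * (4/3)) * (1/3) * x ^ (-(2/3) : ℝ) := by
    have h := deriv_eq_on_pos (f := deriv K₀) (c := c * (4/3)) (p := (1/3 : ℝ)) hd1
    intro x hx
    rw [h x hx]
    norm_num
  have hd3 : ∀ x : ℝ, 0 < x →
      deriv (deriv (deriv K₀)) x = (c * (4/3) * (1/3)) * (-(2/3)) * x ^ (-(5/3) : ℝ) := by
    have h := deriv_eq_on_pos (f := deriv (deriv K₀)) (c := c * (4/3) * (1/3))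
      (p := (-(2/3) : ℝ)) hd2
    intro x hx
    rw [h x hx]
    norm_num
  -- positivity facts
  have hβpos : 0 < β := by rw [hβ]; positivity
  have hL0 : 0 ≤ L := le_trans (abs_nonneg _) hJstarL
  have h1L : 0 < 1 - L := by linarith
  have hsJ : -L ≤ b₂ * Jstar / lM := (abs_le.mp hJstarL).1
  have hβJstar : β * Jstar = I₀ * (b₂ * Jstar / lM) := by rw [hβ]; field_simp
  have hxs_ge : (1 - L) * I₀ ≤ I₀ + β * Jstar := by
    rw [hβJstar]; linarith [mul_le_mul_of_nonneg_left hsJ hI₀.le]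
  have hxspos : 0 < I₀ + β * Jstar :=
    lt_of_lt_of_le (mul_pos h1L hI₀) hxs_ge
  -- rewrite LHS
  have hd3' := hd3 _ hxspos
  have habsJ : |b₂ * J / lM| = b₂ * |J| / lM := by
    rw [abs_div, abs_mul, abs_of_pos hb₂, abs_of_pos hlMpos]
  have hLHS : |β ^ 2 * deriv (deriv (deriv K₀)) (I₀ + β * Jstar) * J|
      = (8/27) * c * β ^ 2 * (I₀ + β * Jstar) ^ (-(5/3) : ℝ) * |J| := by
    rw [hd3']
    have he : β ^ 2 * ((c * (4/3) * (1/3)) * (-(2/3)) * (I₀ + β * Jstar) ^ (-(5/3) : ℝ)) * J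
        = -((8/27) * c * β ^ 2 * (I₀ + β * Jstar) ^ (-(5/3) : ℝ) * J) := by ring
    rw [he, abs_neg, abs_mul]
    congr 1
    exact abs_of_nonneg (by positivity)
  -- 2^(-10/3) = (1/8) * 2^(-1/3)
  have h82 : (2:ℝ) ^ (-(10/3) : ℝ) = (1/8) * (2:ℝ) ^ (-(1/3) : ℝ) := by
    rw [show (-(10/3) : ℝ) = (-3 : ℝ) + (-(1/3) : ℝ) by norm_num, Real.rpow_add two_pos,
      show ((-3 : ℝ)) = ((-3 : ℤ) : ℝ) by norm_num, Real.rpow_intCast]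
    norm_num
  -- key scalar inequality
  have hkey : I₀ ^ 2 * (I₀ + β * Jstar) ^ (-(5/3) : ℝ)
      ≤ I₀ ^ ((1/3) : ℝ) * (1 - L) ^ (-(5/3) : ℝ) := by
    have h1 : (I₀ + β * Jstar) ^ (-(5/3) : ℝ) ≤ ((1 - L) * I₀) ^ (-(5/3) : ℝ) :=
      Real.rpow_le_rpow_of_nonpos (mul_pos h1L hI₀) hxs_ge (by norm_num)
    rw [Real.mul_rpow h1L.le hI₀.le] at h1
    have h2 : I₀ ^ 2 * I₀ ^ (-(5/3) : ℝ) = I₀ ^ ((1/3) : ℝ) := by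
      rw [← Real.rpow_natCast I₀ 2, ← Real.rpow_add hI₀]
      norm_num
    calc I₀ ^ 2 * (I₀ + β * Jstar) ^ (-(5/3) : ℝ)
        ≤ I₀ ^ 2 * ((1 - L) ^ (-(5/3) : ℝ) * I₀ ^ (-(5/3) : ℝ)) :=
          mul_le_mul_of_nonneg_left h1 (by positivity)
      _ = (I₀ ^ 2 * I₀ ^ (-(5/3) : ℝ)) * (1 - L) ^ (-(5/3) : ℝ) := by ring
      _ = I₀ ^ ((1/3) : ℝ) * (1 - L) ^ (-(5/3) : ℝ) := by rw [h2]
  have hβsq : β ^ 2 = b₂ ^ 2 * I₀ ^ 2 / lM ^ 2 := by rw [hβ]; ring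
  have hQpos : 0 < (2:ℝ) ^ (-(1/3) : ℝ) := Real.rpow_pos_of_pos two_pos _
  have hPb : 0 < b₁ ^ (-(4/3) : ℝ) := Real.rpow_pos_of_pos hb₁pos _
  have hPz : 0 < z₄ ^ ((1/3) : ℝ) := Real.rpow_pos_of_pos hz _
  have hPI : 0 < I₀ ^ ((1/3) : ℝ) := Real.rpow_pos_of_pos hI₀ _
  have hPL : 0 < (1 - L) ^ (-(5/3) : ℝ) := Real.rpow_pos_of_pos h1L _
  have part1 : |β ^ 2 * deriv (deriv (deriv K₀)) (I₀ + β * Jstar) * J|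
      ≤ (1/27) * (2:ℝ) ^ (-(1/3) : ℝ) * b₁ ^ (-(4/3) : ℝ) * b₂ *
          (z₄ ^ ((1/3) : ℝ) * I₀ ^ ((1/3) : ℝ) / lM) *
          (1 - L) ^ (-(5/3) : ℝ) * |b₂ * J / lM| := by
    rw [hLHS, habsJ]
    have hCnn : 0 ≤ (1/27) * (2:ℝ) ^ (-(1/3) : ℝ) * b₁ ^ (-(4/3) : ℝ) *
        z₄ ^ ((1/3) : ℝ) * b₂ ^ 2 * |J| / lM ^ 2 := by positivity
    calc (8/27) * c * β ^ 2 * (I₀ + β * Jstar) ^ (-(5/3) : ℝ) * |J|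
        = ((1/27) * (2:ℝ) ^ (-(1/3) : ℝ) * b₁ ^ (-(4/3) : ℝ) *
            z₄ ^ ((1/3) : ℝ) * b₂ ^ 2 * |J| / lM ^ 2) *
            (I₀ ^ 2 * (I₀ + β * Jstar) ^ (-(5/3) : ℝ)) := by
          rw [hβsq, hc, h82]; field_simp
      _ ≤ ((1/27) * (2:ℝ) ^ (-(1/3) : ℝ) * b₁ ^ (-(4/3) : ℝ) *
            z₄ ^ ((1/3) : ℝ) * b₂ ^ 2 * |J| / lM ^ 2) *
            (I₀ ^ ((1/3) : ℝ) * (1 - L) ^ (-(5/3) : ℝ)) :=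
          mul_le_mul_of_nonneg_left hkey hCnn
      _ = (1/27) * (2:ℝ) ^ (-(1/3) : ℝ) * b₁ ^ (-(4/3) : ℝ) * b₂ *
          (z₄ ^ ((1/3) : ℝ) * I₀ ^ ((1/3) : ℝ) / lM) *
          (1 - L) ^ (-(5/3) : ℝ) * (b₂ * |J| / lM) := by
          field_simp
  refine ⟨part1, fun hL47 hAL => ?_⟩
  -- part 2
  set D := (2:ℝ) ^ (-(1/3) : ℝ) * b₁ ^ (-(4/3) : ℝ) * z₄ ^ ((1/3) : ℝ) *
    I₀ ^ ((1/3) : ℝ) * b₂ / lM with hD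
  have hDpos : 0 < D := by rw [hD]; positivity
  have hI13 : I₀ * I₀ ^ (-(2/3) : ℝ) = I₀ ^ ((1/3) : ℝ) := by
    nth_rewrite 1 [← Real.rpow_one I₀]
    rw [← Real.rpow_add hI₀]
    norm_num
  have hm' : m = (4/9) * c * b₂ * I₀ ^ ((1/3) : ℝ) / lM := by
    rw [hm, hd2 I₀ hI₀, hβ, ← hI13]
    field_simp
    ring
  have hm4 : m / 4 = D * (1/72) := by
    rw [hm', hD, hc, h82]
    field_simp
    ring
  have hT : (1 - L) ^ (-(5/3) : ℝ) ≤ ((153/200 : ℝ)) ^ (-(5/3) : ℝ) :=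
    Real.rpow_le_rpow_of_nonpos (by norm_num) (by linarith) (by norm_num)
  have hTlt : ((153/200 : ℝ)) ^ (-(5/3) : ℝ) < 75/47 := by
    rw [Real.rpow_neg (by norm_num)]
    rw [show (75/47 : ℝ) = (47/75 : ℝ)⁻¹ by norm_num]
    exact inv_strictAnti₀ (by norm_num) num_key
  have hA0 : 0 ≤ |b₂ * J / lM| := abs_nonneg _
  have hstep : (1/27) * (2:ℝ) ^ (-(1/3) : ℝ) * b₁ ^ (-(4/3) : ℝ) * b₂ *
      (z₄ ^ ((1/3) : ℝ) * I₀ ^ ((1/3) : ℝ) / lM) *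
      (1 - L) ^ (-(5/3) : ℝ) * |b₂ * J / lM| < m / 4 := by
    rw [hm4]
    have hE : (1/27) * (2:ℝ) ^ (-(1/3) : ℝ) * b₁ ^ (-(4/3) : ℝ) * b₂ *
        (z₄ ^ ((1/3) : ℝ) * I₀ ^ ((1/3) : ℝ) / lM) *
        (1 - L) ^ (-(5/3) : ℝ) * |b₂ * J / lM|
        = D * ((1/27) * ((1 - L) ^ (-(5/3) : ℝ) * |b₂ * J / lM|)) := by
      rw [hD]; ring
    rw [hE]
    apply mul_lt_mul_of_pos_left _ hDpos
    have h1 : (1 - L) ^ (-(5/3) : ℝ) * |b₂ * J / lM|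
        ≤ ((153/200 : ℝ)) ^ (-(5/3) : ℝ) * (47/200) :=
      mul_le_mul hT (le_trans hAL hL47) hA0 (by positivity)
    have h2 : ((153/200 : ℝ)) ^ (-(5/3) : ℝ) * (47/200) < (75/47) * (47/200) :=
      mul_lt_mul_of_pos_right hTlt (by norm_num)
    linarith
  exact lt_of_le_of_lt part1 hstep
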